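/- arXiv:2509.12054 — 2 statements merged into one kernel-verified Lean document; each statement's English description precedes it below -/
import Mathlib

section
/- For 2^{n-1} ≤ k < 2^n, the Walsh–Fourier coefficient of the truncated kernel satisfies \hatφ_s^n(k) = 2^{n(s-1)}(1 - 2^{-s}) > 0. -/
open MeasureTheory Filter Topology
open scoped ENNReal Classical

/-- The Cantor dyadic group: sequences of 0s and 1s with coordinatewise addition mod 2. -/
abbrev G : Type := ℕ → ZMod 2

/-- The metric ρ(x,y) = ∑_{i=1}^∞ 2^{-i} |x_i - y_i| (coordinates indexed from 0 here). -/
noncomputable def rho (x y : G) : ℝ :=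
  ∑' i : ℕ, (2:ℝ) ^ (-(i:ℝ) - 1) * (if x i = y i then 0 else 1)

/-- The subgroup G_n of sequences vanishing in the first n coordinates. -/
def Gset (n : ℕ) : Set G := {x | ∀ i < n, x i = 0}

/-- The coset K_n(x) = x + G_n of G_n containing x. -/
def Kset (n : ℕ) (x : G) : Set G := {y | x - y ∈ Gset n}

/-- The k-th Walsh function. -/
def walsh (k : ℕ) (x : G) : ℝ :=
  ∏ i ∈ Finset.range k, if k.testBit i ∧ x i = 1 then (-1 : ℝ) else 1

/-- The s-kernel: φ_s(0) = 0 and φ_s(x) = 2^{s(n-1)} for x ∈ G_{n-1} \ G_n,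
i.e. 2^{s j} where j is the first nonzero coordinate of x. -/
noncomputable def kernel (s : ℝ) (x : G) : ℝ :=
  if h : ∃ i, x i ≠ 0 then (2:ℝ) ^ (s * (Nat.find h : ℝ)) else 0

/-- The truncated s-kernel φ_s^n. -/
noncomputable def kernelTrunc (s : ℝ) (n : ℕ) (x : G) : ℝ :=
  if x = 0 then 0 else if x ∈ Gset n then (2:ℝ) ^ (s * (n:ℝ)) else kernel s x

/-- Walsh–Fourier coefficient of the s-kernel w.r.t. a (Haar) measure lam. -/
noncomputable def phiHat (s : ℝ) (lam : Measure G) (k : ℕ) : ℝ :=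
  ∫ x, kernel s x * walsh k x ∂lam

/-- Walsh–Fourier coefficient of the truncated s-kernel. -/
noncomputable def phiHatTrunc (s : ℝ) (n : ℕ) (lam : Measure G) (k : ℕ) : ℝ :=
  ∫ x, kernelTrunc s n x * walsh k x ∂lam

/-- Walsh–Fourier coefficient of a measure μ. -/
noncomputable def muHat (μ : Measure G) (k : ℕ) : ℝ :=
  ∫ x, walsh k x ∂μ

/-- s-potential of μ at x. -/
noncomputable def potential (s : ℝ) (μ : Measure G) (x : G) : ℝ≥0∞ :=
  ∫⁻ y, ENNReal.ofReal (kernel s (x - y)) ∂μ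

/-- s-energy of μ. -/
noncomputable def energy (s : ℝ) (μ : Measure G) : ℝ≥0∞ :=
  ∫⁻ x, ∫⁻ y, ENNReal.ofReal (kernel s (x - y)) ∂μ ∂μ

/-- truncated s-energy of μ. -/
noncomputable def energyTrunc (s : ℝ) (n : ℕ) (μ : Measure G) : ℝ≥0∞ :=
  ∫⁻ x, ∫⁻ y, ENNReal.ofReal (kernelTrunc s n (x - y)) ∂μ ∂μ

/-- Diameter of a set in the metric ρ, valued in ℝ≥0∞. -/
noncomputable def diamRho (I : Set G) : ℝ≥0∞ :=
  ⨆ x ∈ I, ⨆ y ∈ I, ENNReal.ofReal (rho x y)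

/-- Pre-Hausdorff measure H^s_δ via countable covers of ρ-diameter < δ. -/
noncomputable def Hdelta (s : ℝ) (δ : ℝ≥0∞) (A : Set G) : ℝ≥0∞ :=
  ⨅ (I : ℕ → Set G) (_ : A ⊆ ⋃ i, I i) (_ : ∀ i, diamRho (I i) < δ),
    ∑' i, diamRho (I i) ^ s

/-- s-dimensional Hausdorff measure w.r.t. the metric ρ. -/
noncomputable def Hmeas (s : ℝ) (A : Set G) : ℝ≥0∞ :=
  ⨆ (δ : ℝ≥0∞) (_ : 0 < δ), Hdelta s δ A

/-- Hausdorff dimension w.r.t. the metric ρ. -/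
noncomputable def hdimRho (A : Set G) : ℝ≥0∞ :=
  ⨆ (t : ℝ) (_ : Hmeas t A = ⊤), ENNReal.ofReal t

/-!
On the shell `G_j \ G_{j+1}` (`j < n`) the truncated kernel equals `2^{sj}`, and on `G_n \ {0}` it
equals `2^{sn}`; `{0}` is Haar-null. Translation by the `i`-th unit vector preserves `G_j` for
`j ≤ i` and flips the sign of `w_k` when bit `i` of `k` is set. Taking `i = n - 1`, the top bit of
`k`, the Haar integral of `w_k` over `G_j` vanishes for `j ≤ n - 1`, while `w_k ≡ 1` on `G_n`,
which has measure `2^{-n}`. Only the shell `j = n - 1` and `G_n` contribute, giving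
`(2^{sn} - 2^{s(n-1)}) 2^{-n} = 2^{n(s-1)}(1 - 2^{-s})`.
-/
lemma measurableSet_Gset (m : ℕ) : MeasurableSet (Gset m) := by
  simp only [Gset, Set.ofPred_forall]
  exact .iInter fun i => .iInter fun _ =>
    measurableSet_eq_fun (measurable_pi_apply i) measurable_const

lemma mem_Gset_succ {m : ℕ} {x : G} : x ∈ Gset (m + 1) ↔ x ∈ Gset m ∧ x m = 0 :=
  Nat.forall_lt_succ_right

lemma Gset_antitone : Antitone Gset := fun _ _ h _ hx i hi => hx i (lt_of_lt_of_le hi h)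

lemma mem_Gset_iff_le_find {x : G} (h : ∃ i, x i ≠ 0) {m : ℕ} : x ∈ Gset m ↔ m ≤ Nat.find h := by
  simp [Gset, Nat.le_find_iff]

lemma single_add_mem_Gset_iff {i m : ℕ} (h : m ≤ i) {x : G} :
    Pi.single i 1 + x ∈ Gset m ↔ x ∈ Gset m := by
  refine forall₂_congr fun j hj => ?_
  rw [Pi.add_apply, Pi.single_eq_of_ne (by omega), zero_add]

lemma single_add_preimage_Gset_succ (m : ℕ) :
    (Pi.single m 1 + ·) ⁻¹' Gset (m + 1) = Gset m \ Gset (m + 1) := by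
  ext x
  simp only [Set.mem_preimage, Set.mem_sdiff, mem_Gset_succ, single_add_mem_Gset_iff le_rfl,
    Pi.add_apply, Pi.single_eq_same, not_and, and_congr_right_iff]
  intro hx
  simp only [hx, forall_const]
  generalize x m = c
  decide +revert

lemma measurable_walsh (k : ℕ) : Measurable (walsh k) :=
  Finset.measurable_prod _ fun i _ =>
    (Measurable.of_discrete
      (f := fun c : ZMod 2 => if k.testBit i ∧ c = 1 then (-1 : ℝ) else 1)).comp
        (measurable_pi_apply i)

lemma abs_walsh (k : ℕ) (x : G) : |walsh k x| = 1 := by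
  rw [walsh, Finset.abs_prod]
  exact Finset.prod_eq_one fun i _ => by split_ifs <;> simp

lemma integrable_walsh (k : ℕ) (μ : Measure G) [IsFiniteMeasure μ] : Integrable (walsh k) μ :=
  .of_bound (measurable_walsh k).aestronglyMeasurable 1 (.of_forall fun x => (abs_walsh k x).le)

lemma walsh_single_add {k i : ℕ} (hbit : k.testBit i) (x : G) :
    walsh k (Pi.single i 1 + x) = -walsh k x := by
  have hi : i ∈ Finset.range k :=
    Finset.mem_range.2 (Nat.lt_of_lt_of_le Nat.lt_two_pow_self (Nat.ge_two_pow_of_testBit hbit))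
  unfold walsh
  rw [← Finset.mul_prod_erase _ _ hi, ← Finset.mul_prod_erase _ _ hi, ← neg_mul]
  congr 1
  · simp only [hbit, true_and, Pi.add_apply, Pi.single_eq_same]
    obtain h | h : x i = 0 ∨ x i = 1 := by generalize x i = c; decide +revert
    · simp [h]
    · simp [h, show (1 + 1 : ZMod 2) = 0 from rfl]
  · refine Finset.prod_congr rfl fun j hj => ?_
    rw [Pi.add_apply, Pi.single_eq_of_ne (Finset.ne_of_mem_erase hj), zero_add]

lemma walsh_eq_one_of_mem_Gset {k n : ℕ} (hk : k < 2 ^ n) {x : G} (hx : x ∈ Gset n) :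
    walsh k x = 1 := by
  refine Finset.prod_eq_one fun i _ => if_neg ?_
  rintro ⟨hbit, hxi⟩
  by_cases hin : i < n
  · simp [hx i hin] at hxi
  · have := Nat.testBit_lt_two_pow (hk.trans_le (Nat.pow_le_pow_right two_pos (not_lt.1 hin)))
    simp [this] at hbit

lemma testBit_of_two_pow_le_of_lt {n k : ℕ} (h1 : 2 ^ n ≤ k) (h2 : k < 2 ^ (n + 1)) :
    k.testBit n := by
  have hk : k ≠ 0 := (Nat.pos_of_ne_zero (by positivity)).trans_le h1 |>.ne'
  rw [← (Nat.log2_eq_iff hk).2 ⟨h1, h2⟩]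
  exact Nat.testBit_log2 hk

section HaarMeasure

variable (lam : Measure G) [lam.IsAddLeftInvariant]

lemma measure_Gset [IsProbabilityMeasure lam] (m : ℕ) : lam (Gset m) = 2⁻¹ ^ m := by
  induction m with
  | zero => simp [Gset]
  | succ m ih =>
    have hshell : lam (Gset m \ Gset (m + 1)) = lam (Gset (m + 1)) := by
      rw [← single_add_preimage_Gset_succ, measure_preimage_add]
    have htwice : 2 * lam (Gset (m + 1)) = 2⁻¹ ^ m :=
      calc 2 * lam (Gset (m + 1)) = lam (Gset (m + 1)) + lam (Gset m \ Gset (m + 1)) := by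
            rw [hshell, two_mul]
        _ = lam (Gset m) := by
            rw [measure_add_sdiff (measurableSet_Gset _).nullMeasurableSet,
              Set.union_eq_right.2 (Gset_antitone m.le_succ)]
        _ = 2⁻¹ ^ m := ih
    rw [pow_succ', ← htwice, ← mul_assoc, ENNReal.inv_mul_cancel two_ne_zero ENNReal.ofNat_ne_top,
      one_mul]

lemma measureReal_Gset [IsProbabilityMeasure lam] (m : ℕ) : lam.real (Gset m) = 2⁻¹ ^ m := by
  simp [measureReal_def, measure_Gset]

lemma measure_singleton_zero [IsProbabilityMeasure lam] : lam {0} = 0 := by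
  by_contra h
  obtain ⟨m, hm⟩ := ENNReal.exists_inv_two_pow_lt h
  have hle : lam {0} ≤ lam (Gset m) :=
    measure_mono <| Set.singleton_subset_iff.2 fun _ _ => rfl
  exact hm.not_ge (measure_Gset lam m ▸ hle)

lemma setIntegral_walsh_eq_zero {k i : ℕ} (hbit : k.testBit i) {S : Set G} (hS : MeasurableSet S)
    (hinv : ∀ x, Pi.single i 1 + x ∈ S ↔ x ∈ S) : ∫ x in S, walsh k x ∂lam = 0 := by
  have hflip : ∀ x, S.indicator (walsh k) (Pi.single i 1 + x) = -S.indicator (walsh k) x := by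
    intro x
    simp only [Set.indicator_apply, hinv, walsh_single_add hbit]
    split_ifs <;> simp
  have := integral_add_left_eq_self (μ := lam) (S.indicator (walsh k)) (Pi.single i 1)
  rw [funext hflip, integral_neg, integral_indicator hS] at this
  linarith

lemma setIntegral_Gset_walsh [IsProbabilityMeasure lam] {k n : ℕ} (hk : k < 2 ^ n) :
    ∫ x in Gset n, walsh k x ∂lam = 2⁻¹ ^ n := by
  rw [setIntegral_congr_fun (measurableSet_Gset n) fun x hx => walsh_eq_one_of_mem_Gset hk hx,
    setIntegral_const, measureReal_Gset, smul_eq_mul, mul_one]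

end HaarMeasure

lemma kernelTrunc_eq_sum_indicator (s : ℝ) (n : ℕ) {x : G} (hx : x ≠ 0) :
    kernelTrunc s n x =
      ∑ j ∈ Finset.range n, (Gset j \ Gset (j + 1)).indicator (fun _ => (2 : ℝ) ^ (s * j)) x
        + (Gset n).indicator (fun _ => (2 : ℝ) ^ (s * n)) x := by
  have h : ∃ i, x i ≠ 0 := Function.ne_iff.1 hx
  simp only [kernelTrunc, kernel, Set.indicator_apply, Set.mem_sdiff, mem_Gset_iff_le_find h,
    if_neg hx, dif_pos h]
  by_cases hn : n ≤ Nat.find h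
  · rw [if_pos hn, if_pos hn, Finset.sum_eq_zero fun j hj => if_neg ?_, zero_add]
    simp only [Finset.mem_range] at hj
    omega
  · have hshell : ∀ j, (j ≤ Nat.find h ∧ ¬j + 1 ≤ Nat.find h) ↔ Nat.find h = j := by omega
    simp only [if_neg hn, add_zero, hshell, Finset.sum_ite_eq, Finset.mem_range, not_le.1 hn,
      if_true]

lemma integral_indicator_const_mul {α : Type*} [MeasurableSpace α] {μ : Measure α} {S : Set α}
    (hS : MeasurableSet S) (c : ℝ) (f : α → ℝ) :
    ∫ x, S.indicator (fun _ => c) x * f x ∂μ = c * ∫ x in S, f x ∂μ := by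
  simp_rw [← Set.indicator_mul_left S (fun _ => c) f]
  rw [integral_indicator hS, integral_const_mul]

lemma phiHatTrunc_eq_sum (s : ℝ) (n k : ℕ) (lam : Measure G) [IsFiniteMeasure lam]
    (h0 : lam {0} = 0) :
    phiHatTrunc s n lam k =
      ∑ j ∈ Finset.range n, (2 : ℝ) ^ (s * j) *
          ((∫ x in Gset j, walsh k x ∂lam) - ∫ x in Gset (j + 1), walsh k x ∂lam)
        + (2 : ℝ) ^ (s * n) * ∫ x in Gset n, walsh k x ∂lam := by
  have hne : ∀ᵐ x ∂lam, x ≠ 0 := compl_mem_ae_iff.2 h0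
  have hint : ∀ (S : Set G) (c : ℝ), MeasurableSet S →
      Integrable (fun x => S.indicator (fun _ => c) x * walsh k x) lam := fun S c hS => by
    simp_rw [← Set.indicator_mul_left S (fun _ => c) (walsh k)]
    exact ((integrable_walsh k lam).const_mul c).indicator hS
  have hshell : ∀ j, MeasurableSet (Gset j \ Gset (j + 1)) := fun j =>
    (measurableSet_Gset j).diff (measurableSet_Gset (j + 1))
  have hsdiff : ∀ j, ∫ x in Gset j \ Gset (j + 1), walsh k x ∂lam =
      (∫ x in Gset j, walsh k x ∂lam) - ∫ x in Gset (j + 1), walsh k x ∂lam := fun j =>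
    setIntegral_sdiff (measurableSet_Gset _) (integrable_walsh k lam).integrableOn
      (Gset_antitone j.le_succ)
  calc phiHatTrunc s n lam k
      = ∫ x, (∑ j ∈ Finset.range n,
            (Gset j \ Gset (j + 1)).indicator (fun _ => (2 : ℝ) ^ (s * j)) x * walsh k x)
          + (Gset n).indicator (fun _ => (2 : ℝ) ^ (s * n)) x * walsh k x ∂lam :=
        integral_congr_ae <| hne.mono fun x hx => by
          simp only [kernelTrunc_eq_sum_indicator s n hx, Finset.sum_mul, add_mul]
    _ = _ := by
      rw [integral_add (integrable_finsetSum _ fun j _ => hint _ _ (hshell j))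
        (hint _ _ (measurableSet_Gset n)), integral_finsetSum _ fun j _ => hint _ _ (hshell j)]
      simp only [integral_indicator_const_mul (hshell _), hsdiff,
        integral_indicator_const_mul (measurableSet_Gset n)]

lemma rpow_sub_rpow_mul_rpow_neg {b : ℝ} (hb : 0 < b) (s t : ℝ) :
    (b ^ (s * t) - b ^ (s * (t - 1))) * b ^ (-t) = b ^ (t * (s - 1)) * (1 - b ^ (-s)) := by
  rw [sub_mul, mul_one_sub, ← Real.rpow_add hb, ← Real.rpow_add hb, ← Real.rpow_add hb]
  ring_nf

theorem stmt7_general (s : ℝ) (hs : 0 < s)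
    (lam : Measure G) [IsProbabilityMeasure lam] [lam.IsAddLeftInvariant]
    (n k : ℕ) (hn : 1 ≤ n) (hk1 : 2 ^ (n - 1) ≤ k) (hk2 : k < 2 ^ n) :
    phiHatTrunc s n lam k = (2:ℝ) ^ ((n:ℝ) * (s - 1)) * (1 - (2:ℝ) ^ (-s)) ∧
    0 < (2:ℝ) ^ ((n:ℝ) * (s - 1)) * (1 - (2:ℝ) ^ (-s)) := by
  obtain ⟨m, rfl⟩ : ∃ m, n = m + 1 := ⟨n - 1, by omega⟩
  rw [Nat.add_sub_cancel] at hk1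
  have hbit : k.testBit m := testBit_of_two_pow_le_of_lt hk1 hk2
  have hvanish : ∀ j ≤ m, ∫ x in Gset j, walsh k x ∂lam = 0 := fun j hj =>
    setIntegral_walsh_eq_zero lam hbit (measurableSet_Gset j) fun _ => single_add_mem_Gset_iff hj
  have hlt : (2 : ℝ) ^ (-s) < 1 := Real.rpow_lt_one_of_one_lt_of_neg one_lt_two (neg_neg_of_pos hs)
  refine ⟨?_, mul_pos (by positivity) (sub_pos.2 hlt)⟩
  rw [phiHatTrunc_eq_sum s _ k lam (measure_singleton_zero lam), Finset.sum_range_succ,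
    Finset.sum_eq_zero fun j hj => ?_, hvanish m le_rfl, setIntegral_Gset_walsh lam hk2,
    ← rpow_sub_rpow_mul_rpow_neg two_pos, Real.rpow_neg two_pos.le, Real.rpow_natCast, inv_pow]
  · push_cast
    ring_nf
  · rw [Finset.mem_range] at hj
    rw [hvanish j hj.le, hvanish (j + 1) hj, sub_zero, mul_zero]

/-- For 2^{n-1} ≤ k < 2^n, \hatφ_s^n(k) = 2^{n(s-1)}(1 - 2^{-s}) > 0. -/
theorem stmt7 (s : ℝ) (hs : 0 < s) (hs1 : s < 1)
    (lam : Measure G) [IsProbabilityMeasure lam] [lam.IsAddLeftInvariant]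
    (n k : ℕ) (hn : 1 ≤ n) (hk1 : 2 ^ (n - 1) ≤ k) (hk2 : k < 2 ^ n) :
    phiHatTrunc s n lam k = (2:ℝ) ^ ((n:ℝ) * (s - 1)) * (1 - (2:ℝ) ^ (-s)) ∧
    0 < (2:ℝ) ^ ((n:ℝ) * (s - 1)) * (1 - (2:ℝ) ^ (-s)) :=
  stmt7_general s hs lam n k hn hk1 hk2
end

section
/- Let μ be a finite nonatomic Borel measure on the Cantor dyadic group and x a point with limsup_{n→∞} μ(K_n(x)) 2^{ns} > 0, where K_n(x) = x + G_n. Then the s-potential Φ_s(x) = ∫_G φ_s(x - y) dμ(y) is infinite. -/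
open MeasureTheory Filter Topology
open scoped ENNReal Classical

/-! On `K_n(x) \ {x}` the kernel `φ_s(x - ·)` is at least `2^{ns}`, so
`μ(K_n(x)) 2^{ns}` is bounded by the part of the potential carried by `K_n(x)`. If the potential
were finite, that part would tend to the part carried by `⋂ K_n(x) = {x}`, which is `0`
since `φ_s(0) = 0`. -/

lemma measurableSet_Kset (n : ℕ) (x : G) : MeasurableSet (Kset n x) := by
  have : Kset n x = ⋂ i ∈ Finset.range n, {y : G | y i = x i} := by
    ext y; simp [Kset, Gset, sub_eq_zero, eq_comm]
  rw [this]
  exact .biInter (Finset.range n).countable_toSet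
    fun i _ => measurableSet_eq_fun (measurable_pi_apply i) measurable_const

lemma Kset_antitone (x : G) : Antitone (Kset · x) :=
  fun _ _ hnm _ hy i hi => hy i (lt_of_lt_of_le hi hnm)

lemma iInter_Kset (x : G) : ⋂ n, Kset n x = {x} := by
  ext y
  simp only [Set.mem_iInter, Set.mem_singleton_iff, Kset, Gset, Set.mem_ofPred_eq]
  constructor
  · intro h
    exact (sub_eq_zero.mp (funext fun i => h (i + 1) i i.lt_succ_self)).symm
  · rintro rfl n i _
    simp

lemma kernel_zero (s : ℝ) : kernel s 0 = 0 := by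
  simp [kernel]

lemma rpow_le_kernel_sub {s : ℝ} (hs : 0 ≤ s) {n : ℕ} {x y : G} (hy : y ∈ Kset n x)
    (hyx : y ≠ x) : (2 : ℝ) ^ (s * n) ≤ kernel s (x - y) := by
  have hex : ∃ i, (x - y) i ≠ 0 := by
    by_contra! h
    exact hyx (sub_eq_zero.mp (funext h)).symm
  have hn : n ≤ Nat.find hex := by
    by_contra! h
    exact Nat.find_spec hex (hy _ h)
  rw [kernel, dif_pos hex]
  gcongr
  norm_num

noncomputable def localPotential (s : ℝ) (μ : Measure G) (n : ℕ) (x : G) : ℝ≥0∞ :=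
  ∫⁻ y in Kset n x, ENNReal.ofReal (kernel s (x - y)) ∂μ

lemma measure_Kset_mul_le_localPotential {s : ℝ} (hs : 0 ≤ s) {μ : Measure G}
    {x : G} (hx : μ {x} = 0) (n : ℕ) :
    μ (Kset n x) * ENNReal.ofReal ((2 : ℝ) ^ ((n : ℝ) * s)) ≤ localPotential s μ n x := by
  rw [mul_comm, ← setLIntegral_const, mul_comm (n : ℝ)]
  refine lintegral_mono_ae ?_
  filter_upwards [ae_restrict_mem (measurableSet_Kset n x),
    ae_restrict_of_ae (measure_eq_zero_iff_ae_notMem.mp hx)] with y hy hyx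
  exact ENNReal.ofReal_le_ofReal (rpow_le_kernel_sub hs hy hyx)

lemma tendsto_localPotential_zero {s : ℝ} {μ : Measure G} {x : G}
    (hfin : potential s μ x ≠ ⊤) :
    Tendsto (fun n => localPotential s μ n x) atTop (𝓝 0) := by
  set ν := μ.withDensity fun y => ENNReal.ofReal (kernel s (x - y))
  have hν : ∀ n, ν (Kset n x) = localPotential s μ n x :=
    fun n => withDensity_apply _ (measurableSet_Kset n x)
  have hνx : ν {x} = 0 := by
    rw [withDensity_apply _ (measurableSet_singleton x), Measure.restrict_singleton]
    simp [kernel_zero]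
  have hlim := tendsto_measure_iInter_atTop (μ := ν)
    (fun n => (measurableSet_Kset n x).nullMeasurableSet) (Kset_antitone x)
    ⟨0, ne_top_of_le_ne_top (by rwa [withDensity_apply _ .univ, Measure.restrict_univ])
      (measure_mono (Set.subset_univ _))⟩
  rw [iInter_Kset, hνx] at hlim
  simpa only [Function.comp_def, hν] using hlim

theorem stmt10_general (s : ℝ) (hs : 0 < s)
    (μ : Measure G) (hna : ∀ x : G, μ {x} = 0) (x : G)
    (hx : 0 < limsup (fun n : ℕ => μ (Kset n x) * ENNReal.ofReal ((2:ℝ) ^ ((n:ℝ) * s))) atTop) :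
    potential s μ x = ⊤ := by
  by_contra hfin
  refine hx.ne' (le_antisymm ?_ bot_le)
  calc limsup _ atTop ≤ limsup (fun n => localPotential s μ n x) atTop :=
        limsup_le_limsup (.of_forall (measure_Kset_mul_le_localPotential hs.le (hna x)))
    _ = 0 := (tendsto_localPotential_zero hfin).limsup_eq

/-- If limsup μ(K_n(x)) 2^{ns} > 0, then the s-potential of μ at x is infinite. -/
theorem stmt10 (s : ℝ) (hs : 0 < s) (hs1 : s < 1)
    (μ : Measure G) [IsFiniteMeasure μ] (hna : ∀ x : G, μ {x} = 0) (x : G)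
    (hx : 0 < limsup (fun n : ℕ => μ (Kset n x) * ENNReal.ofReal ((2:ℝ) ^ ((n:ℝ) * s))) atTop) :
    potential s μ x = ⊤ :=
  stmt10_general s hs μ hna x hx
end
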